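/- arXiv:math/0211201 — 2 statements merged into one kernel-verified Lean document; each statement's English description precedes it below -/
import Mathlib

section
/- Every finite abstract simplicial complex can be realized as Δ(S) for some finite unitary ideal S: given a simplicial complex on vertex set {v₁,...,v_k}, assign distinct primes p₁,...,p_k to the vertices and let S be the set of products p_{a₁}⋯p_{a_r} over faces {v_{a₁},...,v_{a_r}}; then S is a unitary ideal and its associated complex Δ(S) is isomorphic to the given complex. -/
/-!
Since the vertex primes are distinct, `σ ↦ ∏_{i ∈ σ} p i` is injective, and a divisor of such
a squarefree product is again the product over a subset of `σ`. Closure of the complex under subsets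
therefore makes `S` closed under all divisors, in particular under unitary ones. Conversely, every
face of `Δ(S)` consists of vertex primes whose product lies in `S`, i.e. equals the product over a
face of the complex, which then contains the face in question.
-/

namespace Finset

variable {ι : Type*} {p : ι → ℕ}

theorem exists_subset_prod_eq_of_dvd_prod [DecidableEq ι] (hp : ∀ i, (p i).Prime)
    {σ : Finset ι} {d : ℕ} (hd : d ∣ σ.prod p) : ∃ τ ⊆ σ, d = τ.prod p := by
  induction σ using Finset.induction generalizing d with
  | empty => exact ⟨∅, subset_rfl, by simpa using hd⟩
  | @insert a s ha ih =>
    rw [prod_insert ha] at hd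
    by_cases hpa : p a ∣ d
    · obtain ⟨d', rfl⟩ := hpa
      obtain ⟨τ, hτs, rfl⟩ := ih ((mul_dvd_mul_iff_left (hp a).ne_zero).mp hd)
      exact ⟨insert a τ, insert_subset_insert _ hτs, (prod_insert fun h ↦ ha (hτs h)).symm⟩
    · have hcop : d.Coprime (p a) := (((hp a).coprime_iff_not_dvd).mpr hpa).symm
      obtain ⟨τ, hτs, rfl⟩ := ih (hcop.dvd_of_dvd_mul_left hd)
      exact ⟨τ, hτs.trans (subset_insert _ _), rfl⟩

theorem mem_of_dvd_prod_of_injective_primes (hp : ∀ i, (p i).Prime) (hinj : p.Injective)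
    {τ : Finset ι} {i : ι} (h : p i ∣ τ.prod p) : i ∈ τ := by
  obtain ⟨j, hj, hij⟩ := (hp i).prime.exists_mem_finset_dvd h
  rwa [hinj ((Nat.prime_dvd_prime_iff_eq (hp i) (hp j)).mp hij)]

theorem subset_of_prod_dvd_prod_of_injective_primes (hp : ∀ i, (p i).Prime)
    (hinj : p.Injective) {σ τ : Finset ι} (h : σ.prod p ∣ τ.prod p) : σ ⊆ τ :=
  fun _ hi ↦ mem_of_dvd_prod_of_injective_primes hp hinj ((dvd_prod_of_mem p hi).trans h)

end Finset

open Finset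

theorem stmt_4_general (k : ℕ) (Δ : Finset (Finset (Fin k)))
    (hΔ : ∀ σ ∈ Δ, ∀ τ, τ ⊆ σ → τ ∈ Δ)
    (p : Fin k → ℕ) (hp : ∀ i, (p i).Prime) (hinj : Function.Injective p)
    (S : Set ℕ) (hS : S = {n : ℕ | ∃ σ ∈ Δ, n = σ.prod p}) :
    (∀ s ∈ S, 0 < s) ∧
    (∀ s ∈ S, ∀ d : ℕ, d ∣ s → Nat.gcd d (s / d) = 1 → d ∈ S) ∧
    (∀ σ : Finset (Fin k),
      σ ∈ Δ ↔
        ((∀ q ∈ σ.image p, IsPrimePow q ∧ q ∈ S) ∧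
          ((σ.image p : Set ℕ)).Pairwise Nat.Coprime ∧
          (σ.image p).prod id ∈ S)) := by
  subst hS
  have prod_image_p (σ : Finset (Fin k)) : (σ.image p).prod id = σ.prod p :=
    prod_image fun _ _ _ _ h ↦ hinj h
  refine ⟨?_, ?_, fun σ ↦ ⟨fun hσ ↦ ⟨?_, ?_, ⟨σ, hσ, prod_image_p σ⟩⟩, ?_⟩⟩
  · rintro _ ⟨σ, -, rfl⟩
    exact prod_pos fun i _ ↦ (hp i).pos
  · rintro _ ⟨σ, hσ, rfl⟩ d hd -
    obtain ⟨τ, hτσ, rfl⟩ := exists_subset_prod_eq_of_dvd_prod hp hd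
    exact ⟨τ, hΔ σ hσ τ hτσ, rfl⟩
  · simp only [mem_image, forall_exists_index, and_imp, forall_apply_eq_imp_iff₂]
    exact fun i hi ↦ ⟨(hp i).isPrimePow,
      {i}, hΔ σ hσ {i} (singleton_subset_iff.mpr hi), (prod_singleton p i).symm⟩
  · simp only [coe_image]
    rintro _ ⟨i, -, rfl⟩ _ ⟨j, -, rfl⟩ hne
    exact (Nat.coprime_primes (hp i) (hp j)).mpr hne
  · rintro ⟨-, -, τ, hτ, hστ⟩
    rw [prod_image_p] at hστ
    exact hΔ τ hτ σ (subset_of_prod_dvd_prod_of_injective_primes hp hinj hστ.dvd)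

/-- Every finite abstract simplicial complex can be realized as `Δ(S)` for a
finite unitary ideal `S`: assign distinct primes to the vertices and let `S`
be the set of products of primes over faces. Then `S` is a unitary ideal and
`σ ↦ σ.image p` is an isomorphism of the given complex with `Δ(S)`. -/
theorem stmt_4 (k : ℕ) (Δ : Finset (Finset (Fin k)))
    (hΔ : ∀ σ ∈ Δ, ∀ τ, τ ⊆ σ → τ ∈ Δ) (hΔne : Δ.Nonempty)
    (p : Fin k → ℕ) (hp : ∀ i, (p i).Prime) (hinj : Function.Injective p)
    (S : Set ℕ) (hS : S = {n : ℕ | ∃ σ ∈ Δ, n = σ.prod p}) :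
    (∀ s ∈ S, 0 < s) ∧
    (∀ s ∈ S, ∀ d : ℕ, d ∣ s → Nat.gcd d (s / d) = 1 → d ∈ S) ∧
    (∀ σ : Finset (Fin k),
      σ ∈ Δ ↔
        ((∀ q ∈ σ.image p, IsPrimePow q ∧ q ∈ S) ∧
          ((σ.image p : Set ℕ)).Pairwise Nat.Coprime ∧
          (σ.image p).prod id ∈ S)) :=
  stmt_4_general k Δ hΔ p hp hinj S hS
end

section
/- For every facet W of a finite unitary ideal's complex Δ(S), there exists a multiplicative function h with h(q) > 1 for all prime powers q ∈ S such that h attains its strict maximum on S at the element corresponding to W. -/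
/-- For every facet `W` of the complex `Δ(S)` of a finite unitary ideal `S`,
there is a multiplicative `h` with `h q > 1` on all prime powers of `S` whose
strict maximum on `S` is attained at the element `∏ W` corresponding to `W`. -/
theorem stmt_14 (S : Finset ℕ) (hpos : ∀ s ∈ S, 0 < s) (h1 : (1 : ℕ) ∈ S)
    (hui : ∀ s ∈ S, ∀ d : ℕ, d ∣ s → Nat.gcd d (s / d) = 1 → d ∈ S)
    (W : Finset ℕ) (hWpp : ∀ q ∈ W, IsPrimePow q)
    (hWcop : (↑W : Set ℕ).Pairwise Nat.Coprime) (hWS : W.prod id ∈ S)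
    (hWfacet : ∀ T : Finset ℕ, (∀ q ∈ T, IsPrimePow q) →
      (↑T : Set ℕ).Pairwise Nat.Coprime → T.prod id ∈ S → W ⊆ T → W = T) :
    ∃ h : ℕ → ℝ, h 1 = 1 ∧
      (∀ a b : ℕ, Nat.Coprime a b → h (a * b) = h a * h b) ∧
      (∀ q ∈ S, IsPrimePow q → 1 < h q) ∧
      (∀ s ∈ S, s ≠ W.prod id → h s < h (W.prod id)) := by
  classical
  set Bn : ℕ := S.max' ⟨1, h1⟩ with hBn
  set M : ℝ := (Bn : ℝ) + 2 with hMdef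
  have hBn1 : 1 ≤ Bn := S.le_max' 1 h1
  have hM2 : (2 : ℝ) ≤ M := by
    have : (1 : ℝ) ≤ (Bn : ℝ) := by exact_mod_cast hBn1
    linarith
  have hM1 : (1 : ℝ) < M := by linarith
  have hM0 : (0 : ℝ) < M := by linarith
  set g : ℕ → ℕ → ℝ := fun p k => if k = 0 then 1 else if p ^ k ∈ W then M else 2 with hgdef
  set h : ℕ → ℝ := fun n => n.factorization.prod g with hhdef
  have h1' : h 1 = 1 := by simp [hhdef]
  -- multiplicativity
  have hmul : ∀ a b : ℕ, Nat.Coprime a b → h (a * b) = h a * h b := by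
    intro a b hab
    rcases eq_or_ne a 0 with rfl | ha
    · have hb1 : b = 1 := by simpa using hab
      subst hb1; simp [hhdef]
    rcases eq_or_ne b 0 with rfl | hb
    · have ha1 : a = 1 := by simpa using hab
      subst ha1; simp [hhdef]
    · simp only [hhdef]
      rw [Nat.factorization_mul_of_coprime hab,
        Finsupp.prod_add_index_of_disjoint hab.disjoint_primeFactors]
  -- value on prime powers
  have hval : ∀ q : ℕ, IsPrimePow q → h q = if q ∈ W then M else 2 := by
    intro q hq
    obtain ⟨p, k, hp, hk, rfl⟩ := hq
    rw [← Nat.prime_iff] at hp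
    simp only [hhdef]
    rw [hp.factorization_pow, Finsupp.prod_single_index (by simp [hgdef])]
    simp [hgdef, hk.ne']
  have hgt1 : ∀ q : ℕ, IsPrimePow q → 1 < h q := by
    intro q hq
    rw [hval q hq]
    split <;> linarith
  -- h on products of pairwise coprime sets
  have hprodT : ∀ T : Finset ℕ, (↑T : Set ℕ).Pairwise Nat.Coprime →
      h (T.prod id) = ∏ q ∈ T, h q := by
    intro T
    induction T using Finset.induction with
    | empty => intro _; simpa using h1'
    | @insert q T' hq ih =>
      intro hcop
      have hcop' : (↑T' : Set ℕ).Pairwise Nat.Coprime :=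
        hcop.mono (by simp [Finset.coe_insert, Set.subset_insert])
      have hqT : Nat.Coprime q (T'.prod id) := by
        apply Nat.Coprime.prod_right
        intro i hi
        exact hcop (by simp) (by simp [hi]) (fun hqi => hq (hqi ▸ hi))
      rw [Finset.prod_insert hq, Finset.prod_insert hq]
      exact (hmul q (T'.prod id) hqT).trans (by rw [ih hcop'])
  have hNval : h (W.prod id) = M ^ W.card := by
    rw [hprodT W hWcop]
    rw [Finset.prod_congr rfl (fun q hq => by rw [hval q (hWpp q hq), if_pos hq])]
    simp
  -- unitary divisor membership
  have hmem : ∀ s ∈ S, ∀ U : Finset ℕ, U ⊆ s.primeFactors →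
      (∏ p ∈ U, p ^ s.factorization p) ∈ S := by
    intro s hs U hU
    have hs0 : s ≠ 0 := (hpos s hs).ne'
    set d := ∏ p ∈ U, p ^ s.factorization p with hd
    set e := ∏ p ∈ s.primeFactors \ U, p ^ s.factorization p with he
    have hde : e * d = s := by
      rw [hd, he, Finset.prod_sdiff hU]
      exact Nat.factorization_prod_pow_eq_self hs0
    have hd0 : 0 < d :=
      Finset.prod_pos fun p hp => pow_pos (Nat.prime_of_mem_primeFactors (hU hp)).pos _
    have hcop : Nat.Coprime d e := by
      apply Nat.Coprime.prod_left
      intro p hp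
      apply Nat.Coprime.prod_right
      intro q hq
      have hpq : p ≠ q := by rintro rfl; exact (Finset.mem_sdiff.mp hq).2 hp
      exact ((Nat.coprime_primes (Nat.prime_of_mem_primeFactors (hU hp))
        (Nat.prime_of_mem_primeFactors (Finset.mem_sdiff.mp hq).1)).mpr hpq).pow _ _
    have hdiv : s / d = e := by rw [← hde, Nat.mul_div_cancel _ hd0]
    exact hui s hs d ⟨e, by rw [← hde, mul_comm]⟩ (by rw [hdiv]; exact hcop)
  refine ⟨h, h1', hmul, fun q _ hq => hgt1 q hq, ?_⟩
  -- the main estimate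
  intro s hs hsne
  have hs0 : s ≠ 0 := (hpos s hs).ne'
  set F := s.factorization with hF
  set P : ℕ → Prop := fun p => p ^ F p ∈ W with hP
  set A : Finset ℕ := s.primeFactors.filter P with hA
  have hAsub : A ⊆ s.primeFactors := Finset.filter_subset _ _
  have hFpos : ∀ p ∈ s.primeFactors, F p ≠ 0 := by
    intro p hp
    rw [← Nat.support_factorization] at hp
    exact Finsupp.mem_support_iff.mp hp
  have hinj : Set.InjOn (fun p => p ^ F p) A := by
    intro p1 hp1 p2 hp2 heq
    have h1p : p1.Prime := Nat.prime_of_mem_primeFactors (hAsub hp1)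
    have h2p : p2.Prime := Nat.prime_of_mem_primeFactors (hAsub hp2)
    have heq' : p1 ^ F p1 = p2 ^ F p2 := heq
    have hd : p1 ∣ p2 ^ F p2 := by
      have := dvd_pow_self p1 (hFpos p1 (hAsub hp1))
      rwa [heq'] at this
    exact (Nat.prime_dvd_prime_iff_eq h1p h2p).mp (h1p.dvd_of_dvd_pow hd)
  have himg : A.image (fun p => p ^ F p) ⊆ W := by
    intro q hq
    obtain ⟨p, hp, rfl⟩ := Finset.mem_image.mp hq
    exact (Finset.mem_filter.mp hp).2
  have hacard : A.card ≤ W.card := by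
    rw [← Finset.card_image_of_injOn hinj]
    exact Finset.card_le_card himg
  -- expression for h s
  have hsval : h s = M ^ A.card * 2 ^ (s.primeFactors.filter fun p => ¬ P p).card := by
    have : h s = ∏ p ∈ s.primeFactors, g p (F p) := rfl
    rw [this, ← Finset.prod_filter_mul_prod_filter_not s.primeFactors P]
    congr 1
    · rw [Finset.prod_congr rfl (fun p hp => show g p (F p) = M by
        have hp' := Finset.mem_filter.mp hp
        simp only [hgdef]
        rw [if_neg (hFpos p hp'.1), if_pos hp'.2]), Finset.prod_const]
    · rw [Finset.prod_congr rfl (fun p hp => show g p (F p) = 2 by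
        have hp' := Finset.mem_filter.mp hp
        simp only [hgdef]
        rw [if_neg (hFpos p hp'.1), if_neg hp'.2]), Finset.prod_const]
  by_cases hcard : A.card = W.card
  · -- derive a contradiction
    exfalso
    have himgeq : A.image (fun p => p ^ F p) = W :=
      Finset.eq_of_subset_of_card_le himg
        (by rw [Finset.card_image_of_injOn hinj, hcard])
    have hprodA : ∏ p ∈ A, p ^ F p = W.prod id := by
      rw [← himgeq, Finset.prod_image (fun x hx y hy => hinj hx hy)]
      rfl
    by_cases hAall : A = s.primeFactors
    · apply hsne
      rw [← Nat.factorization_prod_pow_eq_self hs0]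
      rw [← hprodA, hAall]
      rfl
    · obtain ⟨p0, hp0s, hp0A⟩ :=
        Finset.exists_of_ssubset (hAsub.ssubset_of_ne (fun hc => hAall hc))
      set q : ℕ := p0 ^ F p0 with hqdef
      have hp0p : p0.Prime := Nat.prime_of_mem_primeFactors hp0s
      have hqpp : IsPrimePow q := by
        rw [hqdef]
        exact (hp0p.prime).isPrimePow.pow (hFpos p0 hp0s)
      have hqW : q ∉ W := fun hc => hp0A (Finset.mem_filter.mpr ⟨hp0s, hc⟩)
      -- all elements of W are components of s with primes in A
      have hWform : ∀ w ∈ W, ∃ p ∈ A, p ^ F p = w := by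
        intro w hw
        rw [← himgeq] at hw
        obtain ⟨p, hp, hpw⟩ := Finset.mem_image.mp hw
        exact ⟨p, hp, hpw⟩
      have hTpp : ∀ r ∈ insert q W, IsPrimePow r := by
        intro r hr
        rcases Finset.mem_insert.mp hr with rfl | hr
        · exact hqpp
        · exact hWpp r hr
      have hTcop : (↑(insert q W) : Set ℕ).Pairwise Nat.Coprime := by
        rw [Finset.coe_insert]
        haveI : Std.Symm Nat.Coprime := ⟨fun a b hab => hab.symm⟩
        apply hWcop.insert_of_symm
        intro w hw _
        obtain ⟨p, hp, rfl⟩ := hWform w hw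
        have hne : p0 ≠ p := fun hc => hp0A (hc ▸ hp)
        exact ((Nat.coprime_primes hp0p
          (Nat.prime_of_mem_primeFactors (hAsub hp))).mpr hne).pow _ _
      have hTS : (insert q W).prod id ∈ S := by
        have hins : insert p0 A ⊆ s.primeFactors := Finset.insert_subset hp0s hAsub
        have h' := hmem s hs (insert p0 A) hins
        rw [Finset.prod_insert hp0A, hprodA] at h'
        have heq2 : (insert q W).prod id = q * W.prod id := Finset.prod_insert hqW
        rwa [heq2]
      have := hWfacet (insert q W) hTpp hTcop hTS (Finset.subset_insert _ _)
      exact hqW (this ▸ Finset.mem_insert_self q W)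
  · -- numeric bound
    have hlt : A.card < W.card := lt_of_le_of_ne hacard hcard
    set m := (s.primeFactors.filter fun p => ¬ P p).card with hm
    have h2m : (2 : ℝ) ^ m ≤ (Bn : ℝ) := by
      have hle : 2 ^ m ≤ ∏ p ∈ s.primeFactors.filter (fun p => ¬ P p), p ^ F p := by
        rw [hm, ← Finset.prod_const]
        apply Finset.prod_le_prod'
        intro p hp
        have hp' : p.Prime := Nat.prime_of_mem_primeFactors (Finset.filter_subset _ _ hp)
        calc 2 ≤ p := hp'.two_le
          _ ≤ p ^ F p := Nat.le_self_pow (hFpos p (Finset.filter_subset _ _ hp)) p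
      have hdvd : (∏ p ∈ s.primeFactors.filter (fun p => ¬ P p), p ^ F p) ∣ s := by
        conv_rhs => rw [← Nat.factorization_prod_pow_eq_self hs0]
        exact Finset.prod_dvd_prod_of_subset _ _ _ (Finset.filter_subset _ _)
      have hles : (∏ p ∈ s.primeFactors.filter (fun p => ¬ P p), p ^ F p) ≤ s :=
        Nat.le_of_dvd (hpos s hs) hdvd
      have hsB : s ≤ Bn := S.le_max' s hs
      have : 2 ^ m ≤ Bn := le_trans hle (le_trans hles hsB)
      exact_mod_cast this
    rw [hsval, hNval]
    calc M ^ A.card * 2 ^ m ≤ M ^ A.card * (Bn : ℝ) := by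
          apply mul_le_mul_of_nonneg_left h2m (le_of_lt (pow_pos hM0 _))
      _ < M ^ A.card * M := by
          apply mul_lt_mul_of_pos_left _ (pow_pos hM0 _)
          rw [hMdef]; linarith
      _ = M ^ (A.card + 1) := by ring
      _ ≤ M ^ W.card := pow_le_pow_right₀ (le_of_lt hM1) hlt
end
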